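/- For all j_c > 0, γ > 0, every e ∈ ℝ³ with e ≠ 0, and every v ∈ ℝ³, the quadratic form of ψ_γ(e) satisfies the two-sided bound 0 ≤ ψ_γ(e) v · v ≤ 2 j_c γ |v|² / max_γ{1, γ|e|}. -/

import Mathlib

open scoped RealInnerProductSpace Topology

/-- Moreau-Yosida regularization of the max-function `x ↦ max{1, x}`. -/
noncomputable def maxReg (γ x : ℝ) : ℝ :=
  if 1 / (2 * γ) ≤ x - 1 then x
  else if x - 1 ≤ -(1 / (2 * γ)) then 1
  else 1 + γ / 2 * (x - 1 + 1 / (2 * γ)) ^ 2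

abbrev E3 := EuclideanSpace ℝ (Fin 3)

/-- The regularized dual-variable map `Λ_γ(e) = j_c γ e / max_γ{1, γ|e|}`. -/
noncomputable def Lam (jc γ : ℝ) (e : E3) : E3 :=
  (jc * γ / maxReg γ (γ * ‖e‖)) • e

/-- The coefficient `c_γ(e)` arising in the derivative of `Λ_γ`. -/
noncomputable def cReg (γ : ℝ) (e : E3) : ℝ :=
  if 1 + 1 / (2 * γ) ≤ γ * ‖e‖ then 1
  else if |γ * ‖e‖ - 1| < 1 / (2 * γ) then γ * (γ * ‖e‖ - 1 + 1 / (2 * γ))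
  else 0

/-- The matrix `ψ_γ(e)` applied to a vector `v`, where `(e ⊗ Λ_γ(e)) v = (Λ_γ(e) ⬝ v) e`. -/
noncomputable def psi (jc γ : ℝ) (e v : E3) : E3 :=
  (jc * γ / maxReg γ (γ * ‖e‖)) • v
    - ((γ * cReg γ e / (maxReg γ (γ * ‖e‖) * ‖e‖)) * ⟪Lam jc γ e, v⟫) • e

/-!
Writing `a = j_c γ / m` with `m = max_γ{1, γ|e|}`, the quadratic form is
`ψ_γ(e) v ⬝ v = a (|v|² - (γ c_γ(e) / m) (e ⬝ v)² / |e|)`.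
By Cauchy–Schwarz the subtracted term is at most `(γ c_γ(e) |e| / m) |v|²`, and
`c_γ(e) · γ|e| ≤ max_γ{1, γ|e|}` (`c_γ(e)` is the slope of `max_γ{1, ·}` at `γ|e|`, and the
tangent there meets the vertical axis at a nonnegative height), so `0 ≤ ψ_γ(e) v ⬝ v ≤ a |v|²`.
-/

lemma one_le_maxReg {γ : ℝ} (hγ : 0 < γ) (x : ℝ) : 1 ≤ maxReg γ x := by
  have : 0 < 1 / (2 * γ) := by positivity
  unfold maxReg
  split_ifs
  · linarith
  · rfl
  · nlinarith [sq_nonneg (x - 1 + 1 / (2 * γ))]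

lemma cReg_nonneg {γ : ℝ} (hγ : 0 < γ) (e : E3) : 0 ≤ cReg γ e := by
  unfold cReg
  split_ifs with _ hmid
  · exact zero_le_one
  · nlinarith [(abs_lt.mp hmid).1]
  · rfl

lemma cReg_mul_le_maxReg {γ : ℝ} (hγ : 0 < γ) (e : E3) :
    cReg γ e * (γ * ‖e‖) ≤ maxReg γ (γ * ‖e‖) := by
  have hx : 0 ≤ γ * ‖e‖ := by positivity
  have hδ : 0 < 1 / (2 * γ) := by positivity
  unfold cReg
  generalize γ * ‖e‖ = x at hx ⊢
  by_cases hup : 1 + 1 / (2 * γ) ≤ x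
  · rw [if_pos hup, maxReg, if_pos (by linarith), one_mul]
  by_cases hmid : |x - 1| < 1 / (2 * γ)
  · obtain ⟨hlo, hhi⟩ := abs_lt.mp hmid
    rw [if_neg hup, if_pos hmid, maxReg, if_neg (by linarith), if_neg (by linarith)]
    have hγδ : γ * (1 / (2 * γ)) = 1 / 2 := by field_simp
    generalize 1 / (2 * γ) = δ at *
    have hγt : γ * (x - 1 + δ) < 1 := by nlinarith
    -- with `t = x - 1 + δ`, the gap `max_γ{1, x} - c x` factors as `(1 - γ t) (1 + t / 2)`
    have hgap : 1 + γ / 2 * (x - 1 + δ) ^ 2 - γ * (x - 1 + δ) * x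
        = (1 - γ * (x - 1 + δ)) * (1 + (x - 1 + δ) / 2) := by
      linear_combination (x - 1 + δ) * hγδ
    linarith [mul_pos (sub_pos.mpr hγt) (by linarith : (0 : ℝ) < 1 + (x - 1 + δ) / 2)]
  · rw [if_neg hup, if_neg hmid, zero_mul]
    exact zero_le_one.trans (one_le_maxReg hγ x)

lemma div_norm_mul_inner_sq_le {E : Type*} [NormedAddCommGroup E] [InnerProductSpace ℝ E]
    {k : ℝ} (hk : 0 ≤ k) {e : E} (hke : k * ‖e‖ ≤ 1) (v : E) :
    k / ‖e‖ * ⟪e, v⟫ ^ 2 ≤ ‖v‖ ^ 2 := by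
  have hcs : ⟪e, v⟫ ^ 2 ≤ ‖e‖ ^ 2 * ‖v‖ ^ 2 := by
    rw [← mul_pow, ← sq_abs]
    exact pow_le_pow_left₀ (abs_nonneg _) (abs_real_inner_le_norm e v) 2
  calc k / ‖e‖ * ⟪e, v⟫ ^ 2 ≤ k / ‖e‖ * (‖e‖ ^ 2 * ‖v‖ ^ 2) := by gcongr
    _ = k * ‖e‖ * ‖v‖ ^ 2 := by
      rcases (norm_nonneg e).eq_or_lt with h | h
      · simp [← h]
      · field_simp
    _ ≤ ‖v‖ ^ 2 := mul_le_of_le_one_left (by positivity) hke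

lemma inner_psi_self (jc γ : ℝ) (e v : E3) :
    ⟪psi jc γ e v, v⟫ = jc * γ / maxReg γ (γ * ‖e‖) *
      (‖v‖ ^ 2 - γ * cReg γ e / maxReg γ (γ * ‖e‖) / ‖e‖ * ⟪e, v⟫ ^ 2) := by
  simp only [psi, Lam, inner_sub_left, real_inner_smul_left, real_inner_self_eq_norm_sq]
  ring

theorem psi_quadratic_form_bounds_general (jc γ : ℝ) (hjc : 0 < jc) (hγ : 0 < γ) (e : E3)
    (v : E3) :
    0 ≤ ⟪psi jc γ e v, v⟫ ∧
    ⟪psi jc γ e v, v⟫ ≤ 2 * jc * γ * ‖v‖ ^ 2 / maxReg γ (γ * ‖e‖) := by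
  have hm : 0 < maxReg γ (γ * ‖e‖) := zero_lt_one.trans_le (one_le_maxReg hγ _)
  have hk : 0 ≤ γ * cReg γ e / maxReg γ (γ * ‖e‖) := by
    have := cReg_nonneg hγ e
    positivity
  have hke : γ * cReg γ e / maxReg γ (γ * ‖e‖) * ‖e‖ ≤ 1 := by
    rw [div_mul_eq_mul_div, div_le_one hm]
    linarith [cReg_mul_le_maxReg hγ e]
  have hsub := div_norm_mul_inner_sq_le hk hke v
  have hsub₀ : 0 ≤ γ * cReg γ e / maxReg γ (γ * ‖e‖) / ‖e‖ * ⟪e, v⟫ ^ 2 := by positivity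
  have ha : 0 ≤ jc * γ / maxReg γ (γ * ‖e‖) := by positivity
  rw [inner_psi_self]
  refine ⟨mul_nonneg ha (by linarith), ?_⟩
  calc _ ≤ jc * γ / maxReg γ (γ * ‖e‖) * ‖v‖ ^ 2 :=
        mul_le_mul_of_nonneg_left (by linarith) ha
    _ ≤ 2 * jc * γ * ‖v‖ ^ 2 / maxReg γ (γ * ‖e‖) := by
      rw [div_mul_eq_mul_div]
      gcongr
      linarith [show 0 ≤ jc * γ * ‖v‖ ^ 2 by positivity]

/-- Two-sided bound for the quadratic form of `ψ_γ(e)`: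
`0 ≤ ψ_γ(e) v ⬝ v ≤ 2 j_c γ ‖v‖² / max_γ{1, γ‖e‖}` for e ≠ 0. -/
theorem psi_quadratic_form_bounds (jc γ : ℝ) (hjc : 0 < jc) (hγ : 0 < γ) (e : E3)
    (he : e ≠ 0) (v : E3) :
    0 ≤ ⟪psi jc γ e v, v⟫ ∧
    ⟪psi jc γ e v, v⟫ ≤ 2 * jc * γ * ‖v‖ ^ 2 / maxReg γ (γ * ‖e‖) :=
  psi_quadratic_form_bounds_general jc γ hjc hγ e v
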